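/- Let k be a positive integer and a, b ∈ ℝ. Define on ℝ × ℝ³ the vector field u = (u₁,u₂,u₃) with u₁(t,y) = −e^{k t}·sin(k y₁)·( sinh(k y₃) − coth(k)·cosh(k y₃) ), u₂ = 0, and u₃(t,y) = e^{k t}·cos(k y₁)·( cosh(k y₃) − coth(k)·sinh(k y₃) ). Then: (i) ∂_{y₁}u₁ + ∂_{y₂}u₂ + ∂_{y₃}u₃ = 0 everywhere (the field is divergence-free); (ii) u₃(t,y₁,y₂,1) = 0 for all t, y₁, y₂ (rigid-wall condition); (iii) each component u_i satisfies ∂ₜ²u_i + ∂²_{y₁}u_i = ((a²+b²)/2)·∂²_{y₂}u_i everywhere. -/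

import Mathlib

noncomputable section

/-- First component of the growing eigenmode of equation (2.36) (real form). -/
def u₁KH (k : ℕ) (t y₁ _y₂ y₃ : ℝ) : ℝ :=
  -(Real.exp (k * t) * Real.sin (k * y₁)
      * (Real.sinh (k * y₃) - (Real.cosh (k : ℝ) / Real.sinh (k : ℝ)) * Real.cosh (k * y₃)))

/-- Second component of the growing eigenmode of equation (2.36). -/
def u₂KH (_k : ℕ) (_t _y₁ _y₂ _y₃ : ℝ) : ℝ := 0

/-- Third component of the growing eigenmode of equation (2.36) (real form). -/
def u₃KH (k : ℕ) (t y₁ _y₂ y₃ : ℝ) : ℝ :=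
  Real.exp (k * t) * Real.cos (k * y₁)
    * (Real.cosh (k * y₃) - (Real.cosh (k : ℝ) / Real.sinh (k : ℝ)) * Real.sinh (k * y₃))

/-!
The two nonzero components are separable modes `e^{kt} X(y₁) Z(y₃)` with `X'' = -k² X`, so
`∂ₜ² + ∂²_{y₁}` annihilates them; since they do not depend on `y₂`, the right-hand side vanishes
too. The divergence cancels because `sin' = k cos` while the vertical
profile `Z₃ = cosh(k·) - coth k · sinh(k·)` of `u₃` satisfies `Z₃' = -k Z₁`, `Z₁` being the profile
of `u₁`; and `Z₃(y) = sinh(k(1 - y)) / sinh k` vanishes at the wall `y = 1`.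
-/

open Real

section ConstMul

variable (c x : ℝ)

theorem hasDerivAt_exp_const_mul : HasDerivAt (fun z => exp (c * z)) (c * exp (c * x)) x := by
  simpa [mul_comm] using ((hasDerivAt_id x).const_mul c).exp

theorem hasDerivAt_sin_const_mul : HasDerivAt (fun z => sin (c * z)) (c * cos (c * x)) x := by
  simpa [mul_comm] using ((hasDerivAt_id x).const_mul c).sin

theorem hasDerivAt_cos_const_mul : HasDerivAt (fun z => cos (c * z)) (-(c * sin (c * x))) x := by
  simpa [mul_comm] using ((hasDerivAt_id x).const_mul c).cos

theorem hasDerivAt_sinh_const_mul : HasDerivAt (fun z => sinh (c * z)) (c * cosh (c * x)) x := by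
  simpa [mul_comm] using ((hasDerivAt_id x).const_mul c).sinh

theorem hasDerivAt_cosh_const_mul : HasDerivAt (fun z => cosh (c * z)) (c * sinh (c * x)) x := by
  simpa [mul_comm] using ((hasDerivAt_id x).const_mul c).cosh

end ConstMul

theorem deriv_deriv_exp_const_mul (c : ℝ) :
    deriv (deriv fun z => exp (c * z)) = fun z => c ^ 2 * exp (c * z) := by
  have h : deriv (fun z => exp (c * z)) = fun z => c * exp (c * z) :=
    funext fun z => (hasDerivAt_exp_const_mul c z).deriv
  funext z
  rw [h, deriv_const_mul_field, (hasDerivAt_exp_const_mul c z).deriv]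
  ring

theorem deriv_deriv_sin_const_mul (c : ℝ) :
    deriv (deriv fun z => sin (c * z)) = fun z => -(c ^ 2 * sin (c * z)) := by
  have h : deriv (fun z => sin (c * z)) = fun z => c * cos (c * z) :=
    funext fun z => (hasDerivAt_sin_const_mul c z).deriv
  funext z
  rw [h, deriv_const_mul_field, (hasDerivAt_cos_const_mul c z).deriv]
  ring

theorem deriv_deriv_cos_const_mul (c : ℝ) :
    deriv (deriv fun z => cos (c * z)) = fun z => -(c ^ 2 * cos (c * z)) := by
  have h : deriv (fun z => cos (c * z)) = fun z => -(c * sin (c * z)) :=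
    funext fun z => (hasDerivAt_cos_const_mul c z).deriv
  funext z
  rw [h, deriv.fun_neg, deriv_const_mul_field, (hasDerivAt_sin_const_mul c z).deriv]
  ring

def separableMode (T X Z : ℝ → ℝ) : ℝ → ℝ → ℝ → ℝ → ℝ :=
  fun t y₁ _ y₃ => T t * X y₁ * Z y₃

section SeparableMode

variable (T X Z : ℝ → ℝ) (t y₁ y₂ y₃ : ℝ)

theorem deriv_separableMode_horizontal :
    deriv (fun z => separableMode T X Z t z y₂ y₃) y₁ = T t * deriv X y₁ * Z y₃ := by
  simp only [separableMode, deriv_mul_const_field, deriv_const_mul_field]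

theorem deriv_separableMode_vertical :
    deriv (fun z => separableMode T X Z t y₁ y₂ z) y₃ = T t * X y₁ * deriv Z y₃ := by
  simp only [separableMode, deriv_const_mul_field]

theorem separableMode_wave {T X : ℝ → ℝ} (Z : ℝ → ℝ) {c : ℝ} (σ : ℝ)
    (hT : deriv (deriv T) = fun t => c ^ 2 * T t)
    (hX : deriv (deriv X) = fun y => -(c ^ 2 * X y)) (t y₁ y₂ y₃ : ℝ) :
    deriv (fun s => deriv (fun s' => separableMode T X Z s' y₁ y₂ y₃) s) t
      + deriv (fun z => deriv (fun z' => separableMode T X Z t z' y₂ y₃) z) y₁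
      = σ * deriv (fun z => deriv (fun z' => separableMode T X Z t y₁ z' y₃) z) y₂ := by
  simp only [separableMode, deriv_mul_const_field, deriv_const_mul_field, deriv_const]
  rw [congrFun hT, congrFun hX]
  ring

theorem u₁KH_eq_separableMode (k : ℕ) :
    u₁KH k = separableMode (fun t => exp (k * t)) (fun y => sin (k * y))
      (fun y => cosh k / sinh k * cosh (k * y) - sinh (k * y)) := by
  funext t y₁ y₂ y₃
  simp only [u₁KH, separableMode]
  ring

theorem u₃KH_eq_separableMode (k : ℕ) :
    u₃KH k = separableMode (fun t => exp (k * t)) (fun y => cos (k * y))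
      (fun y => cosh (k * y) - cosh k / sinh k * sinh (k * y)) :=
  rfl

/-- Equation (2.36): the exponentially growing eigenmode
`u = (u₁,0,u₃)` of the linearized Kelvin-Helmholtz problem is divergence-free,
satisfies the rigid-wall condition `u₃ = 0` at `y₃ = 1`, and each component solves
`∂ₜ²uᵢ + ∂²_{y₁}uᵢ = ((a²+b²)/2)·∂²_{y₂}uᵢ`; its growth rate `k` is independent of
the transverse magnetic field strengths `a, b`. -/
theorem stmt_12 (k : ℕ) (hk : 0 < k) (a b : ℝ) :
    -- (i) divergence-free
    (∀ t y₁ y₂ y₃ : ℝ,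
      deriv (fun z => u₁KH k t z y₂ y₃) y₁
        + deriv (fun z => u₂KH k t y₁ z y₃) y₂
        + deriv (fun z => u₃KH k t y₁ y₂ z) y₃ = 0)
    -- (ii) rigid-wall condition
    ∧ (∀ t y₁ y₂ : ℝ, u₃KH k t y₁ y₂ 1 = 0)
    -- (iii) each component solves the interface equation
    ∧ (∀ u ∈ ({u₁KH k, u₂KH k, u₃KH k} : Set (ℝ → ℝ → ℝ → ℝ → ℝ)),
        ∀ t y₁ y₂ y₃ : ℝ,
          deriv (fun s => deriv (fun s' => u s' y₁ y₂ y₃) s) t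
            + deriv (fun z => deriv (fun z' => u t z' y₂ y₃) z) y₁
          = (a ^ 2 + b ^ 2) / 2 * deriv (fun z => deriv (fun z' => u t y₁ z' y₃) z) y₂) := by
  refine ⟨fun t y₁ y₂ y₃ => ?_, fun t y₁ y₂ => ?_, ?_⟩
  · have hZ := ((hasDerivAt_cosh_const_mul k y₃).fun_sub
      ((hasDerivAt_sinh_const_mul k y₃).const_mul (cosh k / sinh k))).deriv
    rw [u₁KH_eq_separableMode, u₃KH_eq_separableMode, deriv_separableMode_horizontal,
      deriv_separableMode_vertical, (hasDerivAt_sin_const_mul k y₁).deriv, hZ]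
    simp only [u₂KH, deriv_const]
    ring
  · have hsinh : sinh (k : ℝ) ≠ 0 := (sinh_pos_iff.mpr (Nat.cast_pos.mpr hk)).ne'
    simp [u₃KH, div_mul_cancel₀ _ hsinh]
  · rintro u (rfl | rfl | rfl)
    · rw [u₁KH_eq_separableMode]
      exact separableMode_wave _ _ (deriv_deriv_exp_const_mul k) (deriv_deriv_sin_const_mul k)
    · simp [u₂KH]
    · rw [u₃KH_eq_separableMode]
      exact separableMode_wave _ _ (deriv_deriv_exp_const_mul k) (deriv_deriv_cos_const_mul k)
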